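/- Let n ≥ 2 and let A^{(j)}_x (j ∈ {1,…,n}, x ∈ {0,1}) be 2×2 Hermitian matrices with (A^{(j)}_x)² ≤ I_2 in the Loewner order for all j, x. Then for every s ∈ {0,1}^n, (n−1) P_{1,s}² + Σ_{j=2}^n P_{j,s}² ≤ 2(n−1)·I_{2^n} in the Loewner order. -/

import Mathlib

open Matrix Finset ComplexOrder

noncomputable section

/-- 2×2 complex matrices. -/
abbrev Mat2 := Matrix (Fin 2) (Fin 2) ℂ

/-- Tensor product of `n` 2×2 matrices, indexed by bit strings `Fin n → Fin 2`. -/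
def tensorN (n : ℕ) (M : Fin n → Mat2) :
    Matrix (Fin n → Fin 2) (Fin n → Fin 2) ℂ :=
  Matrix.of fun f g => ∏ j, M j (f j) (g j)

/-- The operators `P_{j,s}`. -/
def Pop (n : ℕ) [NeZero n] (A : Fin n → Fin 2 → Mat2) (s : Fin n → Fin 2) (j : Fin n) :
    Matrix (Fin n → Fin 2) (Fin n → Fin 2) ℂ :=
  if j = 0 then
    ((-1 : ℂ) ^ ((s 0 : ℕ)) * ((Real.sqrt 2 : ℂ))⁻¹) •
      tensorN n (fun k => if k = 0 then A 0 0 + A 0 1 else A k 0)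
  else
    ((-1 : ℂ) ^ ((s j : ℕ)) * ((Real.sqrt 2 : ℂ))⁻¹) •
      tensorN n (fun k => if k = 0 then A 0 0 - A 0 1 else if k = j then A j 1 else 1)

/-! Each `P_{j,s}²` is again a tensor product, and the tensor product is monotone in each
positive factor, so every factor `(A^{(k)}_x)² ≤ I` outside the first slot may be replaced by `I`.
With `a = A^{(1)}_0`, `b = A^{(1)}_1` this gives `P_{1,s}² ≤ ½(a+b)² ⊗ I` and
`P_{j,s}² ≤ ½(a-b)² ⊗ I`, so by the parallelogram identity every pair satisfies
`P_{1,s}² + P_{j,s}² ≤ (a² + b²) ⊗ I ≤ 2I`. Summing over the `n - 1` indices `j ≠ 1` gives the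
claim. -/

open Function
open scoped MatrixOrder

section TensorN

variable {n : ℕ}

lemma tensorN_mul (M N : Fin n → Mat2) :
    tensorN n M * tensorN n N = tensorN n (fun j => M j * N j) := by
  ext f h
  simp only [tensorN, of_apply, mul_apply, ← prod_mul_distrib]
  exact (Fintype.prod_sum fun j x => M j (f j) x * N j x (h j)).symm

lemma tensorN_conjTranspose (M : Fin n → Mat2) :
    (tensorN n M)ᴴ = tensorN n (fun j => (M j)ᴴ) := by
  ext f g
  simp [tensorN, conjTranspose_apply]

lemma tensorN_one : tensorN n 1 = 1 := by
  ext f g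
  simp only [tensorN, of_apply, Pi.one_apply, one_apply]
  split_ifs with h
  · simp [h]
  · obtain ⟨j, hj⟩ := ne_iff.mp h
    exact prod_eq_zero (mem_univ j) (if_neg hj)

lemma tensorN_nonneg {M : Fin n → Mat2} (hM : 0 ≤ M) : 0 ≤ tensorN n M := by
  choose B hB using fun j => by
    open scoped Matrix.Norms.L2Operator in
    exact CStarAlgebra.nonneg_iff_eq_star_mul_self.mp (show (0 : Mat2) ≤ M j from hM j)
  have : tensorN n M = (tensorN n B)ᴴ * tensorN n B := by
    rw [tensorN_conjTranspose, tensorN_mul]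
    exact congrArg _ (funext hB)
  rw [this]
  exact (posSemidef_conjTranspose_mul_self _).nonneg

lemma tensorN_update_apply (M : Fin n → Mat2) (j : Fin n) (X : Mat2) (f g : Fin n → Fin 2) :
    tensorN n (update M j X) f g = X (f j) (g j) * ∏ k ∈ univ.erase j, M k (f k) (g k) := by
  rw [tensorN, of_apply, ← mul_prod_erase univ _ (mem_univ j), update_self]
  congr 1
  exact prod_congr rfl fun k hk => by rw [update_of_ne (ne_of_mem_erase hk)]

lemma tensorN_update_add (M : Fin n → Mat2) (j : Fin n) (X Y : Mat2) :
    tensorN n (update M j (X + Y)) = tensorN n (update M j X) + tensorN n (update M j Y) := by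
  ext f g
  simp only [tensorN_update_apply, Matrix.add_apply, add_mul]

lemma tensorN_update_sub (M : Fin n → Mat2) (j : Fin n) (X Y : Mat2) :
    tensorN n (update M j (X - Y)) = tensorN n (update M j X) - tensorN n (update M j Y) :=
  eq_sub_of_add_eq (by rw [← tensorN_update_add, sub_add_cancel])

lemma tensorN_update_smul (M : Fin n → Mat2) (j : Fin n) (c : ℂ) (X : Mat2) :
    tensorN n (update M j (c • X)) = c • tensorN n (update M j X) := by
  ext f g
  simp only [tensorN_update_apply, Matrix.smul_apply, smul_eq_mul, mul_assoc]

lemma tensorN_update_mono {M : Fin n → Mat2} {j : Fin n} (hM : ∀ k ≠ j, 0 ≤ M k)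
    {X Y : Mat2} (hXY : X ≤ Y) : tensorN n (update M j X) ≤ tensorN n (update M j Y) := by
  rw [← sub_nonneg, ← tensorN_update_sub]
  exact tensorN_nonneg (le_update_iff.mpr ⟨sub_nonneg.mpr hXY, hM⟩)

lemma tensorN_mono {M N : Fin n → Mat2} (hM : 0 ≤ M) (hMN : M ≤ N) :
    tensorN n M ≤ tensorN n N := by
  classical
  suffices ∀ t : Finset (Fin n), tensorN n M ≤ tensorN n (t.piecewise N M) by
    simpa using this univ
  intro t
  induction t using Finset.induction_on with
  | empty => simp
  | insert a t ha ih =>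
    have hpiece : ∀ k ≠ a, 0 ≤ t.piecewise N M k := fun k _ => by
      by_cases hk : k ∈ t
      · simpa [hk] using (hM k).trans (hMN k)
      · simpa [hk] using hM k
    calc tensorN n M ≤ tensorN n (t.piecewise N M) := ih
      _ = tensorN n (update (t.piecewise N M) a (M a)) := by
        rw [← t.piecewise_eq_of_notMem N M ha, update_eq_self]
      _ ≤ tensorN n (update (t.piecewise N M) a (N a)) := tensorN_update_mono hpiece (hMN a)
      _ = tensorN n ((insert a t).piecewise N M) := by rw [piecewise_insert]

end TensorN

lemma inv_two_smul_add_sq_add_inv_two_smul_sub_sq {R : Type*} [Ring R] [Algebra ℂ R] (X Y : R) :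
    (2 : ℂ)⁻¹ • (X + Y) ^ 2 + (2 : ℂ)⁻¹ • (X - Y) ^ 2 = X ^ 2 + Y ^ 2 := by
  have : (X + Y) ^ 2 + (X - Y) ^ 2 = (2 : ℂ) • (X ^ 2 + Y ^ 2) := by
    rw [two_smul]
    noncomm_ring
  rw [← smul_add, this, smul_smul, inv_mul_cancel₀ two_ne_zero, one_smul]

lemma inv_two_smul_sq_nonneg {X : Mat2} (hX : X.IsHermitian) : 0 ≤ (2 : ℂ)⁻¹ • X ^ 2 :=
  (PosSemidef.smul (nonneg_iff_posSemidef.mp (IsSelfAdjoint.sq_nonneg hX))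
    (by norm_num [Complex.nonneg_iff])).nonneg

section Pop

variable {n : ℕ} [NeZero n] (A : Fin n → Fin 2 → Mat2) (s : Fin n → Fin 2)

lemma sign_mul_inv_sqrt_two_sq (k : ℕ) :
    ((-1 : ℂ) ^ k * ((Real.sqrt 2 : ℂ))⁻¹) ^ 2 = (2 : ℂ)⁻¹ := by
  rw [mul_pow, ← pow_mul, mul_comm k 2, pow_mul, neg_one_sq, one_pow, one_mul, inv_pow,
    ← Complex.ofReal_pow, Real.sq_sqrt zero_le_two, Complex.ofReal_ofNat]

lemma Pop_zero_sq :
    Pop n A s 0 ^ 2 =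
      tensorN n (update (fun k => A k 0 ^ 2) 0 ((2 : ℂ)⁻¹ • (A 0 0 + A 0 1) ^ 2)) := by
  rw [Pop, if_pos rfl, smul_pow, sign_mul_inv_sqrt_two_sq, sq, tensorN_mul,
    tensorN_update_smul]
  congr 2
  ext1 k
  rcases eq_or_ne k 0 with rfl | hk <;> simp [*, sq]

lemma Pop_sq_of_ne_zero {j : Fin n} (hj : j ≠ 0) :
    Pop n A s j ^ 2 =
      tensorN n (update (update 1 j (A j 1 ^ 2)) 0 ((2 : ℂ)⁻¹ • (A 0 0 - A 0 1) ^ 2)) := by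
  rw [Pop, if_neg hj, smul_pow, sign_mul_inv_sqrt_two_sq, sq, tensorN_mul,
    tensorN_update_smul]
  congr 2
  ext1 k
  rcases eq_or_ne k 0 with rfl | hk
  · simp [sq]
  rcases eq_or_ne k j with rfl | hkj <;> simp [*, sq]

variable {A} (hherm : ∀ j x, (A j x).IsHermitian) (hsq : ∀ j x, A j x ^ 2 ≤ 1)
include hherm hsq

lemma Pop_zero_sq_le :
    Pop n A s 0 ^ 2 ≤ tensorN n (update 1 0 ((2 : ℂ)⁻¹ • (A 0 0 + A 0 1) ^ 2)) := by
  rw [Pop_zero_sq]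
  refine tensorN_mono (le_update_iff.mpr ⟨?_, fun k _ => IsSelfAdjoint.sq_nonneg (hherm k 0)⟩)
    (update_le_update_iff.mpr ⟨le_rfl, fun k _ => hsq k 0⟩)
  exact inv_two_smul_sq_nonneg ((hherm 0 0).add (hherm 0 1))

lemma Pop_sq_le_of_ne_zero {j : Fin n} (hj : j ≠ 0) :
    Pop n A s j ^ 2 ≤ tensorN n (update 1 0 ((2 : ℂ)⁻¹ • (A 0 0 - A 0 1) ^ 2)) := by
  rw [Pop_sq_of_ne_zero A s hj]
  have hfactors : 0 ≤ update (1 : Fin n → Mat2) j (A j 1 ^ 2) ∧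
      update (1 : Fin n → Mat2) j (A j 1 ^ 2) ≤ 1 :=
    ⟨le_update_iff.mpr ⟨IsSelfAdjoint.sq_nonneg (hherm j 1), fun _ _ => zero_le_one⟩,
      update_le_iff.mpr ⟨hsq j 1, fun _ _ => le_rfl⟩⟩
  refine tensorN_mono (le_update_iff.mpr ⟨?_, fun k _ => hfactors.1 k⟩)
    (update_le_update_iff.mpr ⟨le_rfl, fun k _ => hfactors.2 k⟩)
  exact inv_two_smul_sq_nonneg ((hherm 0 0).sub (hherm 0 1))

lemma Pop_zero_sq_add_Pop_sq_le {j : Fin n} (hj : j ≠ 0) :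
    Pop n A s 0 ^ 2 + Pop n A s j ^ 2 ≤ (2 : ℂ) • 1 :=
  calc Pop n A s 0 ^ 2 + Pop n A s j ^ 2
      ≤ tensorN n (update 1 0 ((2 : ℂ)⁻¹ • (A 0 0 + A 0 1) ^ 2))
        + tensorN n (update 1 0 ((2 : ℂ)⁻¹ • (A 0 0 - A 0 1) ^ 2)) :=
        add_le_add (Pop_zero_sq_le s hherm hsq) (Pop_sq_le_of_ne_zero s hherm hsq hj)
    _ = tensorN n (update 1 0 (A 0 0 ^ 2 + A 0 1 ^ 2)) := by
        rw [← tensorN_update_add, inv_two_smul_add_sq_add_inv_two_smul_sub_sq]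
    _ ≤ tensorN n (update 1 0 ((2 : ℂ) • 1)) :=
        tensorN_update_mono (fun _ _ => zero_le_one)
          (by rw [two_smul]; exact add_le_add (hsq 0 0) (hsq 0 1))
    _ = (2 : ℂ) • 1 := by rw [tensorN_update_smul, update_one, tensorN_one]

end Pop

theorem stmt3_general (n : ℕ) [NeZero n]
    (A : Fin n → Fin 2 → Mat2)
    (hherm : ∀ j x, (A j x).IsHermitian)
    (hsq : ∀ j x, ((1 : Mat2) - A j x * A j x).PosSemidef)
    (s : Fin n → Fin 2) :
    (((2 * ((n : ℝ) - 1) : ℝ) : ℂ) •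
        (1 : Matrix (Fin n → Fin 2) (Fin n → Fin 2) ℂ)
      - ((((n : ℂ) - 1)) • (Pop n A s 0) ^ 2
          + ∑ j ∈ Finset.univ.filter (fun j : Fin n => j ≠ 0),
              (Pop n A s j) ^ 2)).PosSemidef := by
  have hsq_le : ∀ j x, A j x ^ 2 ≤ 1 := fun j x => by rw [sq]; exact hsq j x
  have hcard : ((univ.filter fun j : Fin n => j ≠ 0).card : ℂ) = n - 1 := by
    rw [filter_ne', card_erase_of_mem (mem_univ 0), card_univ, Fintype.card_fin,
      Nat.cast_pred (Nat.pos_of_neZero n)]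
  rw [← le_iff]
  calc ((n : ℂ) - 1) • Pop n A s 0 ^ 2 + ∑ j ∈ univ.filter (· ≠ 0), Pop n A s j ^ 2
      = ∑ j ∈ univ.filter (· ≠ 0), (Pop n A s 0 ^ 2 + Pop n A s j ^ 2) := by
        rw [sum_add_distrib, sum_const, ← Nat.cast_smul_eq_nsmul ℂ, hcard]
    _ ≤ ∑ j ∈ univ.filter (· ≠ 0), (2 : ℂ) • 1 :=
        sum_le_sum fun j hj => Pop_zero_sq_add_Pop_sq_le s hherm hsq_le (mem_filter.mp hj).2
    _ = _ := by
        rw [sum_const, ← Nat.cast_smul_eq_nsmul ℂ, hcard, smul_smul, mul_comm]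
        push_cast
        rfl

/-- if every `A^{(j)}_x` is Hermitian with `(A^{(j)}_x)² ≤ I`, then
`(n-1) P_{1,s}² + Σ_{j=2}^n P_{j,s}² ≤ 2(n-1)·I` in the Loewner order. -/
theorem stmt3 (n : ℕ) [NeZero n] (hn : 2 ≤ n)
    (A : Fin n → Fin 2 → Mat2)
    (hherm : ∀ j x, (A j x).IsHermitian)
    (hsq : ∀ j x, ((1 : Mat2) - A j x * A j x).PosSemidef)
    (s : Fin n → Fin 2) :
    (((2 * ((n : ℝ) - 1) : ℝ) : ℂ) •
        (1 : Matrix (Fin n → Fin 2) (Fin n → Fin 2) ℂ)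
      - ((((n : ℂ) - 1)) • (Pop n A s 0) ^ 2
          + ∑ j ∈ Finset.univ.filter (fun j : Fin n => j ≠ 0),
              (Pop n A s j) ^ 2)).PosSemidef :=
  stmt3_general n A hherm hsq s
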